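/- arXiv:2011.10261 — 2 statements merged into one kernel-verified Lean document; each statement's English description precedes it below -/
import Mathlib

section
/- If X is a topological space with |X| ≤ 𝔠 (the cardinality of the continuum) and (𝔠, ω) is a pinning down pair for X, then X is separable. -/
open Cardinal Topology Set

universe u

def PinningDownPair (X : Type u) [TopologicalSpace X] (k lam : Cardinal.{u}) : Prop :=
  ∀ 𝒰 : Set (Set X), (∀ U ∈ 𝒰, IsOpen U ∧ U.Nonempty) → #𝒰 ≤ k →
    ∃ B : Set X, #B ≤ lam ∧ ∀ U ∈ 𝒰, (B ∩ U).Nonempty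

/-- If no set of size `≤ λ` is dense, the complements of their closures form a family of
nonempty open sets that no set of size `≤ λ` can meet: `B` misses `(closure B)ᶜ`. -/
theorem PinningDownPair.exists_dense_mk_le {X : Type u} [TopologicalSpace X]
    {k lam : Cardinal.{u}} (hpd : PinningDownPair X k lam)
    (hk : #{s : Set X // #s ≤ lam} ≤ k) : ∃ D : Set X, #D ≤ lam ∧ Dense D := by
  by_contra! hnotDense
  set 𝒰 : Set (Set X) := range fun s : {s : Set X // #s ≤ lam} => (closure s.1)ᶜ
  have hopen : ∀ U ∈ 𝒰, IsOpen U ∧ U.Nonempty := by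
    rintro _ ⟨⟨s, hs⟩, rfl⟩
    exact ⟨isClosed_closure.isOpen_compl,
      nonempty_compl.mpr fun h => hnotDense s hs (dense_iff_closure_eq.mpr h)⟩
  obtain ⟨B, hB, hmeet⟩ := hpd 𝒰 hopen (mk_range_le.trans hk)
  obtain ⟨x, hxB, hx⟩ := hmeet _ ⟨⟨B, hB⟩, rfl⟩
  exact hx (subset_closure hxB)

theorem mk_bounded_set_aleph0_le_continuum {X : Type u} (hX : #X ≤ 𝔠) :
    #{s : Set X // #s ≤ ℵ₀} ≤ 𝔠 :=
  calc #{s : Set X // #s ≤ ℵ₀} ≤ max #X ℵ₀ ^ ℵ₀ := mk_bounded_set_le X ℵ₀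
    _ ≤ 𝔠 ^ ℵ₀ := power_le_power_right (max_le hX aleph0_le_continuum)
    _ = 𝔠 := continuum_power_aleph0

theorem stmt_1 {X : Type u} [TopologicalSpace X]
    (hX : #X ≤ Cardinal.continuum.{u})
    (hpd : PinningDownPair X Cardinal.continuum.{u} ℵ₀) :
    TopologicalSpace.SeparableSpace X := by
  obtain ⟨D, hD, hdense⟩ := hpd.exists_dense_mk_le (mk_bounded_set_aleph0_le_continuum hX)
  exact ⟨⟨D, le_aleph0_iff_set_countable.mp hD, hdense⟩⟩
end

section
/- If (2^{2^λ}, λ) is a pinning down pair for a Hausdorff space X, then d(X) ≤ λ. -/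
/-! A set of at most `λ` points meeting every nonempty `V \ cl W`, for `V, W` regular open,
separates the regular open sets by their traces; by a counting argument, pinning down families
of size `2^{2^λ}` therefore bounds the number of regular open sets by `2^λ`. Since a point of a
Hausdorff space is determined by the regular open sets containing it, `|X| ≤ 2^{2^λ} =: κ`, so
there are at most `κ^λ = κ` sets of size `≤ λ`. Pinning down the complements of the closures of
the non-dense ones by a single set `B` of size `≤ λ` forces `B` itself to be dense. -/

open Cardinal Topology Set

universe u

variable {X : Type u} [TopologicalSpace X]

def IsRegularOpen (s : Set X) : Prop := interior (closure s) = s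

lemma isRegularOpen_interior_closure (s : Set X) : IsRegularOpen (interior (closure s)) :=
  interior_closure_idem

lemma IsRegularOpen.isOpen {s : Set X} (hs : IsRegularOpen s) : IsOpen s :=
  hs ▸ isOpen_interior

lemma IsRegularOpen.subset_of_subset_closure {s t : Set X} (ht : IsRegularOpen t) (hs : IsOpen s)
    (hst : s ⊆ closure t) : s ⊆ t :=
  ht ▸ interior_maximal hst hs

lemma exists_isRegularOpen_mem_notMem [T2Space X] {x y : X} (hxy : x ≠ y) :
    ∃ W, IsRegularOpen W ∧ x ∈ W ∧ y ∉ W := by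
  obtain ⟨U, V, hU, hV, hxU, hyV, hUV⟩ := t2_separation hxy
  refine ⟨interior (closure U), isRegularOpen_interior_closure U,
    interior_maximal subset_closure hU hxU, fun hy => ?_⟩
  exact (hUV.closure_left hV).notMem_of_mem_left (interior_subset hy) hyV

lemma mk_le_two_pow_mk_regularOpen [T2Space X] : #X ≤ 2 ^ #{W : Set X | IsRegularOpen W} := by
  rw [← mk_set]
  refine mk_le_of_injective (f := fun x => {W : {W : Set X | IsRegularOpen W} | x ∈ W.1}) ?_
  intro x y hxy
  by_contra hne
  obtain ⟨W, hW, hxW, hyW⟩ := exists_isRegularOpen_mem_notMem hne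
  exact hyW ((Set.ext_iff.1 hxy ⟨W, hW⟩).1 hxW)

/-- If `B` meets every nonempty `V \ cl W` with `V, W ∈ 𝒲`, then a regular open `V ∈ 𝒲` is
determined by `V ∩ B`. -/
lemma mk_le_two_pow_of_inter_diff_closure_nonempty {𝒲 : Set (Set X)} {B : Set X}
    (h𝒲 : ∀ W ∈ 𝒲, IsRegularOpen W)
    (hB : ∀ V ∈ 𝒲, ∀ W ∈ 𝒲, (V \ closure W).Nonempty → (B ∩ (V \ closure W)).Nonempty) :
    #𝒲 ≤ 2 ^ #B := by
  have subset_of_inter_eq : ∀ V ∈ 𝒲, ∀ W ∈ 𝒲, B ∩ V = B ∩ W → V ⊆ W := by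
    intro V hV W hW hVW
    refine (h𝒲 W hW).subset_of_subset_closure (h𝒲 V hV).isOpen ?_
    by_contra hsub
    obtain ⟨b, hbB, hbV, hbW⟩ := hB V hV W hW (sdiff_nonempty.2 hsub)
    have hbBW : b ∈ B ∩ W := hVW ▸ ⟨hbB, hbV⟩
    exact hbW (subset_closure hbBW.2)
  rw [← mk_set]
  refine mk_le_of_injective (f := fun W : 𝒲 => ((↑) : B → X) ⁻¹' W) ?_
  rintro ⟨V, hV⟩ ⟨W, hW⟩ hVW
  rw [Subtype.preimage_coe_eq_preimage_coe_iff] at hVW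
  rw [Subtype.mk.injEq]
  exact (subset_of_inter_eq V hV W hW hVW).antisymm (subset_of_inter_eq W hW V hV hVW.symm)

namespace PinningDownPair

variable {k lam : Cardinal.{u}}

lemma mk_le_two_pow (hpd : PinningDownPair X k lam) {𝒲 : Set (Set X)}
    (h𝒲 : ∀ W ∈ 𝒲, IsRegularOpen W) (hk : #𝒲 * #𝒲 ≤ k) : #𝒲 ≤ 2 ^ lam := by
  set 𝒰 : Set (Set X) := {S ∈ image2 (fun V W => V \ closure W) 𝒲 𝒲 | S.Nonempty}
  have h𝒰 : ∀ U ∈ 𝒰, IsOpen U ∧ U.Nonempty := by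
    rintro _ ⟨⟨V, hV, W, -, rfl⟩, hne⟩
    exact ⟨(h𝒲 V hV).isOpen.sdiff isClosed_closure, hne⟩
  have h𝒰k : #𝒰 ≤ k := (mk_le_mk_of_subset (sep_subset _ _)).trans (mk_image2_le.trans hk)
  obtain ⟨B, hBlam, hB⟩ := hpd 𝒰 h𝒰 h𝒰k
  calc #𝒲 ≤ 2 ^ #B := mk_le_two_pow_of_inter_diff_closure_nonempty h𝒲
        fun V hV W hW hne => hB _ ⟨mem_image2_of_mem hV hW, hne⟩
    _ ≤ 2 ^ lam := power_le_power_left two_ne_zero hBlam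

lemma mk_regularOpen_le (hpd : PinningDownPair X k lam) (hk : ℵ₀ ≤ k) (hlamk : 2 ^ lam < k) :
    #{W : Set X | IsRegularOpen W} ≤ 2 ^ lam := by
  by_contra! hlt
  obtain ⟨𝒲, h𝒲RO, h𝒲⟩ := le_mk_iff_exists_subset.1 (Order.succ_le_of_lt hlt)
  have h𝒲k : #𝒲 ≤ k := h𝒲 ▸ Order.succ_le_of_lt hlamk
  have := hpd.mk_le_two_pow h𝒲RO ((mul_le_mul' h𝒲k h𝒲k).trans (mul_eq_self hk).le)
  exact (Order.lt_succ (2 ^ lam)).not_ge (h𝒲 ▸ this)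

/-- Pin down the complements of the closures of all non-dense sets of size at most `lam`. -/
lemma exists_dense_mk_le_s8 (hpd : PinningDownPair X k lam) (hX : #X ≤ k) (hk : ℵ₀ ≤ k)
    (hpow : k ^ lam ≤ k) : ∃ D : Set X, Dense D ∧ #D ≤ lam := by
  set 𝒰 : Set (Set X) := {S | ∃ A : Set X, #A ≤ lam ∧ ¬Dense A ∧ S = (closure A)ᶜ}
  have h𝒰 : ∀ U ∈ 𝒰, IsOpen U ∧ U.Nonempty := by
    rintro _ ⟨A, -, hA, rfl⟩
    exact ⟨isClosed_closure.isOpen_compl, nonempty_compl.2 fun h => hA (dense_iff_closure_eq.2 h)⟩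
  have h𝒰k : #𝒰 ≤ k := by
    have hrange : 𝒰 ⊆ range fun A : {A : Set X // #A ≤ lam} => (closure A.1)ᶜ := by
      rintro _ ⟨A, hA, -, rfl⟩
      exact ⟨⟨A, hA⟩, rfl⟩
    calc #𝒰 ≤ #{A : Set X // #A ≤ lam} := (mk_le_mk_of_subset hrange).trans mk_range_le
      _ ≤ max #X ℵ₀ ^ lam := mk_bounded_set_le X lam
      _ ≤ k ^ lam := power_le_power_right (max_le hX hk)
      _ ≤ k := hpow
  obtain ⟨B, hBlam, hB⟩ := hpd 𝒰 h𝒰 h𝒰k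
  refine ⟨B, by_contra fun hBd => ?_, hBlam⟩
  obtain ⟨b, hbB, hbC⟩ := hB _ ⟨B, hBlam, hBd, rfl⟩
  exact hbC (subset_closure hbB)

end PinningDownPair

lemma Cardinal.two_pow_two_pow_pow_self {lam : Cardinal.{u}} (hlam : ℵ₀ ≤ lam) :
    ((2 : Cardinal.{u}) ^ (2 : Cardinal.{u}) ^ lam) ^ lam = 2 ^ (2 : Cardinal.{u}) ^ lam := by
  rw [← power_mul, mul_eq_left (hlam.trans (cantor lam).le) (cantor lam).le
    (aleph0_pos.trans_le hlam).ne']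

theorem stmt_8 {X : Type u} [TopologicalSpace X] [T2Space X] (lam : Cardinal.{u})
    (hlam : ℵ₀ ≤ lam)
    (hpd : PinningDownPair X (((2 : Cardinal.{u}) ^ ((2 : Cardinal.{u}) ^ lam))) lam) :
    ∃ D : Set X, Dense D ∧ #D ≤ lam := by
  have hκ : ℵ₀ ≤ (2 : Cardinal.{u}) ^ (2 : Cardinal.{u}) ^ lam :=
    hlam.trans ((cantor lam).trans (cantor _)).le
  have hX : #X ≤ (2 : Cardinal.{u}) ^ (2 : Cardinal.{u}) ^ lam := mk_le_two_pow_mk_regularOpen.trans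
    (power_le_power_left two_ne_zero (hpd.mk_regularOpen_le hκ (cantor _)))
  exact hpd.exists_dense_mk_le_s8 hX hκ (two_pow_two_pow_pow_self hlam).le
end
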